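/- arXiv:2010.00406 — 3 statements merged into one kernel-verified Lean document; each statement's English description precedes it below -/
import Mathlib

section
/- If the sequences generated by SGD with momentum (m_{k+1} = β_k m_k + g_k, x_{k+1} = x_k - α_k m_{k+1}) and by stochastic primal averaging (z_{k+1} = z_k - η_k g_k, x'_{k+1} = (1-c_{k+1}) x'_k + c_{k+1} z_{k+1}) are initialized with x_0 = x'_0 = z_0 and m_0 = 0, and if for all k ≥ 0 the hyper-parameters satisfy α_k = η_k c_{k+1} and η_{k+1} = (η_k - α_k)/β_{k+1}, then x_k = x'_k for all k ≥ 0. -/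
/-!
The SPA iterate `z` is the SGD+M iterate pushed further along the momentum:
`z k = x k - (η k * β k) • m k`. Given this invariant, the averaging step of SPA with weight
`c (k + 1) = α k / η k` lands exactly on the SGD+M step, and the relation
`η (k + 1) * β (k + 1) = η k - α k` is precisely what carries the invariant to `k + 1`.
-/

section

variable {𝕜 E : Type*} [Field 𝕜] [AddCommGroup E] [Module 𝕜 E]

lemma spa_average_eq_sgdm_step {x z m g : E} {α β η c : 𝕜}
    (hz : z = x - (η * β) • m) (hα : α = η * c) :
    (1 - c) • x + c • (z - η • g) = x - α • (β • m + g) := by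
  subst hz hα
  module

lemma spa_step_eq_sgdm_step_sub_momentum {x z m g : E} {α β η : 𝕜}
    (hz : z = x - (η * β) • m) :
    z - η • g = x - α • (β • m + g) - (η - α) • (β • m + g) := by
  subst hz
  module

theorem sgdm_eq_spa_and_spa_eq_extrapolation (g m x z x' : ℕ → E) (α β η c : ℕ → 𝕜)
    (hm0 : m 0 = 0) (hx0 : x 0 = x' 0) (hz0 : z 0 = x' 0)
    (hm : ∀ k, m (k + 1) = β k • m k + g k)
    (hx : ∀ k, x (k + 1) = x k - α k • m (k + 1))
    (hz : ∀ k, z (k + 1) = z k - η k • g k)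
    (hx' : ∀ k, x' (k + 1) = (1 - c (k + 1)) • x' k + c (k + 1) • z (k + 1))
    (hα : ∀ k, α k = η k * c (k + 1))
    (hηβ : ∀ k, η (k + 1) * β (k + 1) = η k - α k) :
    ∀ k, x k = x' k ∧ z k = x k - (η k * β k) • m k := by
  intro k
  induction k with
  | zero => simp [hm0, hz0, hx0]
  | succ k ih =>
    obtain ⟨hxx', hzx⟩ := ih
    constructor
    · rw [hx', hz, hx, hm, ← hxx', spa_average_eq_sgdm_step hzx (hα k)]
    · rw [hz, hx, hm, hηβ, spa_step_eq_sgdm_step_sub_momentum hzx]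

end

theorem sgdm_spa_equivalence_general {n : ℕ}
    (g m x z x' : ℕ → EuclideanSpace ℝ (Fin n))
    (α β η c : ℕ → ℝ)
    (hβpos : ∀ k, 0 < β k)
    (hm0 : m 0 = 0) (hx0 : x 0 = x' 0) (hz0 : z 0 = x' 0)
    (hm : ∀ k, m (k + 1) = β k • m k + g k)
    (hx : ∀ k, x (k + 1) = x k - α k • m (k + 1))
    (hz : ∀ k, z (k + 1) = z k - η k • g k)
    (hx' : ∀ k, x' (k + 1) = (1 - c (k + 1)) • x' k + c (k + 1) • z (k + 1))
    (hα : ∀ k, α k = η k * c (k + 1))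
    (hη : ∀ k, η (k + 1) = (η k - α k) / β (k + 1)) :
    ∀ k, x k = x' k := by
  have hηβ : ∀ k, η (k + 1) * β (k + 1) = η k - α k := fun k => by
    rw [hη, div_mul_cancel₀ _ (hβpos (k + 1)).ne']
  exact fun k =>
    (sgdm_eq_spa_and_spa_eq_extrapolation g m x z x' α β η c hm0 hx0 hz0 hm hx hz hx' hα hηβ k).1

theorem sgdm_spa_equivalence {n : ℕ}
    (g m x z x' : ℕ → EuclideanSpace ℝ (Fin n))
    (α β η c : ℕ → ℝ)
    (hαpos : ∀ k, 0 < α k) (hβpos : ∀ k, 0 < β k)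
    (hηpos : ∀ k, 0 < η k) (hcpos : ∀ k, 0 < c k)
    (hm0 : m 0 = 0) (hx0 : x 0 = x' 0) (hz0 : z 0 = x' 0)
    (hm : ∀ k, m (k + 1) = β k • m k + g k)
    (hx : ∀ k, x (k + 1) = x k - α k • m (k + 1))
    (hz : ∀ k, z (k + 1) = z k - η k • g k)
    (hx' : ∀ k, x' (k + 1) = (1 - c (k + 1)) • x' k + c (k + 1) • z (k + 1))
    (hα : ∀ k, α k = η k * c (k + 1))
    (hη : ∀ k, η (k + 1) = (η k - α k) / β (k + 1)) :
    ∀ k, x k = x' k :=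
  sgdm_spa_equivalence_general g m x z x' α β η c hβpos hm0 hx0 hz0 hm hx hz hx' hα hη
end

section
/- Suppose f : R^n → R is differentiable with L-Lipschitz gradient. For the SPA iteration, with g_k = ∇f(x_k) the exact gradient, the following holds: (L/c_{k+1}²)‖x_{k+1}-x_k‖² ≤ L((1/c_k)-1+η_k L)((1/c_k)-1)‖x_k-x_{k-1}‖² + η_k² L ‖g_k‖² + 2η_k L ((1/c_k)-1)(f(x_{k-1}) - f(x_k)). -/
/-!
With `A = 1/c_k - 1`, `d = x_k - x_{k-1}` and `g = ∇f(x_k)`, the step is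
`x_{k+1} - x_k = c_{k+1} (A d - η_k g)`, so after expanding the square the claim becomes
`0 ≤ 2 η_k A · L (f(x_{k-1}) - f(x_k) + ⟪d, g⟫ + L/2 ‖d‖²)`. The bracket is controlled by the
two-sided descent lemma `|f y - f x - ⟪∇f(x), y - x⟫| ≤ L/2 ‖y - x‖²`, which follows by fencing
`t ↦ f(x + t(y - x)) - f x - t ⟪∇f(x), y - x⟫` inside `± L/2 t² ‖y - x‖²`.
-/

open InnerProductSpace Set

theorem norm_sub_sub_fderiv_le_of_lipschitz_fderiv {E F : Type*}
    [NormedAddCommGroup E] [NormedSpace ℝ E] [NormedAddCommGroup F] [NormedSpace ℝ F]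
    {f : E → F} {f' : E → E →L[ℝ] F} {L : ℝ} {x : E}
    (hf : ∀ z, HasFDerivAt f (f' z) z) (hLip : ∀ z, ‖f' z - f' x‖ ≤ L * ‖z - x‖) (y : E) :
    ‖f y - f x - f' x (y - x)‖ ≤ L / 2 * ‖y - x‖ ^ 2 := by
  set d := y - x
  let φ : ℝ → F := fun t => f (x + t • d) - f x - t • f' x d
  have hφ : ∀ t, HasDerivAt φ ((f' (x + t • d) - f' x) d) t := fun t => by
    have hline : HasDerivAt (fun t : ℝ => x + t • d) d t := by
      simpa using ((hasDerivAt_id t).smul_const d).const_add x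
    exact ((((hf _).comp_hasDerivAt t hline).sub_const (f x)).sub
      ((hasDerivAt_id t).smul_const (f' x d))).congr_deriv (by simp)
  have hB : ∀ t, HasDerivAt (fun t => L / 2 * t ^ 2 * ‖d‖ ^ 2) (L * t * ‖d‖ ^ 2) t := fun t =>
    (((hasDerivAt_pow 2 t).const_mul (L / 2)).mul_const (‖d‖ ^ 2)).congr_deriv
      (by simp only [Nat.cast_ofNat]; ring)
  have hbound : ∀ t ∈ Ico (0 : ℝ) 1, ‖(f' (x + t • d) - f' x) d‖ ≤ L * t * ‖d‖ ^ 2 := by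
    rintro t ⟨ht, -⟩
    calc ‖(f' (x + t • d) - f' x) d‖ ≤ ‖f' (x + t • d) - f' x‖ * ‖d‖ :=
          ContinuousLinearMap.le_opNorm _ _
      _ ≤ L * ‖t • d‖ * ‖d‖ := by
          gcongr
          simpa using hLip (x + t • d)
      _ = L * t * ‖d‖ ^ 2 := by rw [norm_smul, Real.norm_of_nonneg ht]; ring
  have := image_norm_le_of_norm_deriv_right_le_deriv_boundary
    (fun t _ => (hφ t).continuousAt.continuousWithinAt) (fun t _ => (hφ t).hasDerivWithinAt)
    (by simp [φ]) hB hbound (right_mem_Icc.2 zero_le_one)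
  simpa [φ, d] using this

theorem abs_sub_sub_inner_le_of_lipschitz_gradient {E : Type*}
    [NormedAddCommGroup E] [InnerProductSpace ℝ E] [CompleteSpace E]
    {f : E → ℝ} {f' : E → E} {L : ℝ} {x : E}
    (hf : ∀ z, HasGradientAt f (f' z) z) (hLip : ∀ z, ‖f' z - f' x‖ ≤ L * ‖z - x‖) (y : E) :
    |f y - f x - ⟪f' x, y - x⟫_ℝ| ≤ L / 2 * ‖y - x‖ ^ 2 := by
  refine norm_sub_sub_fderiv_le_of_lipschitz_fderiv (f' := fun z => toDual ℝ E (f' z))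
    (fun z => (hf z).hasFDerivAt) (fun z => ?_) y
  rw [← map_sub, LinearIsometryEquiv.norm_map]
  exact hLip z

theorem mul_add_mul_nonneg_of_abs_le {X M D : ℝ} (hD : 0 ≤ D) (h : |X| ≤ M * D) :
    0 ≤ M * (X + M * D) := by
  rcases le_or_gt 0 M with hM | hM
  · exact mul_nonneg hM (by linarith [neg_abs_le X])
  · have hX : X = 0 := abs_nonpos_iff.1 (h.trans (mul_nonpos_of_nonpos_of_nonneg hM.le hD))
    have hD0 : D = 0 := by nlinarith [abs_nonneg X]
    simp [hX, hD0]

theorem spa_xdiff_step_general {n : ℕ} (f : EuclideanSpace ℝ (Fin n) → ℝ)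
    (f' : EuclideanSpace ℝ (Fin n) → EuclideanSpace ℝ (Fin n))
    (L : ℝ)
    (hgrad : ∀ x, HasGradientAt f (f' x) x)
    (hLip : ∀ x y, ‖f' x - f' y‖ ≤ L * ‖x - y‖)
    (c_k c_k1 η_k : ℝ) (hck0 : 0 < c_k) (hck1 : c_k ≤ 1)
    (hck10 : 0 < c_k1) (hη : 0 < η_k)
    (x_km1 x_k : EuclideanSpace ℝ (Fin n)) :
    let z_k := x_k + (1 / c_k - 1) • (x_k - x_km1)
    let z_k1 := z_k - η_k • f' x_k
    let x_k1 := (1 - c_k1) • x_k + c_k1 • z_k1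
    (L / c_k1 ^ 2) * ‖x_k1 - x_k‖ ^ 2
      ≤ L * (1 / c_k - 1 + η_k * L) * (1 / c_k - 1) * ‖x_k - x_km1‖ ^ 2
        + η_k ^ 2 * L * ‖f' x_k‖ ^ 2
        + 2 * η_k * L * (1 / c_k - 1) * (f x_km1 - f x_k) := by
  intro z_k z_k1 x_k1
  set A := 1 / c_k - 1
  set d := x_k - x_km1
  set g := f' x_k
  have hA : 0 ≤ A := sub_nonneg.2 (one_le_one_div hck0 hck1)
  have hstep : x_k1 - x_k = c_k1 • (A • d - η_k • g) := by
    simp only [x_k1, z_k1, z_k]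
    module
  have hLHS : L / c_k1 ^ 2 * ‖x_k1 - x_k‖ ^ 2
      = L * (A ^ 2 * ‖d‖ ^ 2 - 2 * (A * η_k) * ⟪d, g⟫_ℝ + η_k ^ 2 * ‖g‖ ^ 2) := by
    rw [hstep, norm_smul, mul_pow, Real.norm_of_nonneg hck10.le, norm_sub_sq_real,
      real_inner_smul_left, real_inner_smul_right, norm_smul, norm_smul,
      Real.norm_of_nonneg hA, Real.norm_of_nonneg hη.le]
    field_simp
  have hdescent : |f x_km1 - f x_k + ⟪d, g⟫_ℝ| ≤ L / 2 * ‖d‖ ^ 2 := by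
    have h := abs_sub_sub_inner_le_of_lipschitz_gradient hgrad (fun z => hLip z x_k) x_km1
    rwa [← neg_sub x_k x_km1, inner_neg_right, sub_neg_eq_add, norm_neg, real_inner_comm] at h
  have hkey := mul_add_mul_nonneg_of_abs_le (sq_nonneg ‖d‖) hdescent
  rw [hLHS]
  linarith [mul_nonneg (mul_nonneg hη.le hA) hkey]

theorem spa_xdiff_step {n : ℕ} (f : EuclideanSpace ℝ (Fin n) → ℝ)
    (f' : EuclideanSpace ℝ (Fin n) → EuclideanSpace ℝ (Fin n))
    (L : ℝ)
    (hgrad : ∀ x, HasGradientAt f (f' x) x)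
    (hLip : ∀ x y, ‖f' x - f' y‖ ≤ L * ‖x - y‖)
    (c_k c_k1 η_k : ℝ) (hck0 : 0 < c_k) (hck1 : c_k ≤ 1)
    (hck10 : 0 < c_k1) (hck11 : c_k1 ≤ 1) (hη : 0 < η_k)
    (x_km1 x_k : EuclideanSpace ℝ (Fin n)) :
    let z_k := x_k + (1 / c_k - 1) • (x_k - x_km1)
    let z_k1 := z_k - η_k • f' x_k
    let x_k1 := (1 - c_k1) • x_k + c_k1 • z_k1
    (L / c_k1 ^ 2) * ‖x_k1 - x_k‖ ^ 2
      ≤ L * (1 / c_k - 1 + η_k * L) * (1 / c_k - 1) * ‖x_k - x_km1‖ ^ 2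
        + η_k ^ 2 * L * ‖f' x_k‖ ^ 2
        + 2 * η_k * L * (1 / c_k - 1) * (f x_km1 - f x_k) :=
  spa_xdiff_step_general f f' L hgrad hLip c_k c_k1 η_k hck0 hck1 hck10 hη x_km1 x_k
end

section
/- Suppose f : R^n → R is differentiable with L-Lipschitz gradient. For the SPA update z_{k+1} = z_k - η ∇f(x_k) with exact gradients, it holds that f(z_{k+1}) + (η/2)‖∇f(z_k)‖² ≤ f(z_k) - (η/2)‖∇f(x_k)‖² + (η/2)L²((1/c)-1)²‖x_k - x_{k-1}‖² + (η²L/2)‖∇f(x_k)‖². -/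
/-!
Apply the descent lemma `f (z + v) ≤ f z + ⟪∇f z, v⟫ + L/2 ‖v‖²` at `z_k` with `v = -η ∇f(x_k)`,
and rewrite `-2⟪∇f z_k, ∇f x_k⟫` by polarization as `‖∇f z_k - ∇f x_k‖² - ‖∇f z_k‖² - ‖∇f x_k‖²`.
The remaining gradient gap is controlled by the Lipschitz bound, since
`z_k - x_k = (1/c - 1) • (x_k - x_{k-1})`.
-/

open InnerProductSpace Set

variable {E : Type*} [NormedAddCommGroup E] [InnerProductSpace ℝ E] [CompleteSpace E]

theorem HasGradientAt.hasDerivAt_comp_add_smul {f : E → ℝ} {g x v : E} {t : ℝ}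
    (h : HasGradientAt f g (x + t • v)) :
    HasDerivAt (fun s : ℝ => f (x + s • v)) ⟪g, v⟫_ℝ t := by
  have hline : HasDerivAt (fun s : ℝ => x + s • v) v t := by
    simpa using ((hasDerivAt_id t).smul_const v).const_add x
  exact h.hasFDerivAt.comp_hasDerivAt t hline

section LipschitzGradient

variable {f : E → ℝ} {f' : E → E} {L : ℝ}

theorem image_add_le_of_lipschitz_gradient (hgrad : ∀ x, HasGradientAt f (f' x) x)
    (hLip : ∀ x y, ‖f' x - f' y‖ ≤ L * ‖x - y‖) (x v : E) :
    f (x + v) ≤ f x + ⟪f' x, v⟫_ℝ + L / 2 * ‖v‖ ^ 2 := by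
  let φ : ℝ → ℝ := fun t => f (x + t • v) - t * ⟪f' x, v⟫_ℝ - L / 2 * t ^ 2 * ‖v‖ ^ 2
  have hφ : ∀ t, HasDerivAt φ (⟪f' (x + t • v) - f' x, v⟫_ℝ - L * t * ‖v‖ ^ 2) t := by
    intro t
    have h := (((hgrad (x + t • v)).hasDerivAt_comp_add_smul).sub
      ((hasDerivAt_id t).mul_const ⟪f' x, v⟫_ℝ)).sub
      (((hasDerivAt_pow 2 t).const_mul (L / 2)).mul_const (‖v‖ ^ 2))
    exact h.congr_deriv (by rw [inner_sub_left]; push_cast; ring)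
  have hφ_nonpos : ∀ t ∈ interior (Ici (0 : ℝ)),
      ⟪f' (x + t • v) - f' x, v⟫_ℝ - L * t * ‖v‖ ^ 2 ≤ 0 := by
    intro t ht
    rw [interior_Ici, mem_Ioi] at ht
    have hgap : ‖f' (x + t • v) - f' x‖ ≤ L * (t * ‖v‖) := by
      simpa [norm_smul, abs_of_pos ht] using hLip (x + t • v) x
    rw [sub_nonpos]
    calc ⟪f' (x + t • v) - f' x, v⟫_ℝ
        ≤ ‖f' (x + t • v) - f' x‖ * ‖v‖ := real_inner_le_norm _ _
      _ ≤ L * (t * ‖v‖) * ‖v‖ := mul_le_mul_of_nonneg_right hgap (norm_nonneg v)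
      _ = L * t * ‖v‖ ^ 2 := by ring
  have hanti : AntitoneOn φ (Ici 0) :=
    antitoneOn_of_hasDerivWithinAt_nonpos (convex_Ici 0)
      (fun t _ => (hφ t).continuousAt.continuousWithinAt)
      (fun t _ => (hφ t).hasDerivWithinAt) hφ_nonpos
  have h01 : φ 1 ≤ φ 0 := hanti (mem_Ici.2 le_rfl) (mem_Ici.2 zero_le_one) zero_le_one
  simp only [φ, one_smul, zero_smul, add_zero] at h01
  linarith

theorem image_sub_smul_le_of_lipschitz_gradient (hgrad : ∀ x, HasGradientAt f (f' x) x)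
    (hLip : ∀ x y, ‖f' x - f' y‖ ≤ L * ‖x - y‖) (z g : E) (η : ℝ) :
    f (z - η • g) + η / 2 * ‖f' z‖ ^ 2
      ≤ f z - η / 2 * ‖g‖ ^ 2 + η / 2 * ‖f' z - g‖ ^ 2 + η ^ 2 * L / 2 * ‖g‖ ^ 2 := by
  have hdescent := image_add_le_of_lipschitz_gradient hgrad hLip z (-(η • g))
  rw [← sub_eq_add_neg, inner_neg_right, real_inner_smul_right, norm_neg, norm_smul,
    mul_pow, Real.norm_eq_abs, sq_abs] at hdescent
  have hpolar := norm_sub_sq_real (f' z) g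
  linear_combination hdescent - η / 2 * hpolar

end LipschitzGradient

theorem spa_f_update_general {n : ℕ} (f : EuclideanSpace ℝ (Fin n) → ℝ)
    (f' : EuclideanSpace ℝ (Fin n) → EuclideanSpace ℝ (Fin n))
    (L : ℝ)
    (hgrad : ∀ x, HasGradientAt f (f' x) x)
    (hLip : ∀ x y, ‖f' x - f' y‖ ≤ L * ‖x - y‖)
    (c η : ℝ) (hη : 0 < η)
    (x_km1 x_k : EuclideanSpace ℝ (Fin n)) :
    let z_k := x_k + (1 / c - 1) • (x_k - x_km1)
    let z_k1 := z_k - η • f' x_k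
    f z_k1 + (η / 2) * ‖f' z_k‖ ^ 2
      ≤ f z_k - (η / 2) * ‖f' x_k‖ ^ 2
        + (η / 2) * L ^ 2 * (1 / c - 1) ^ 2 * ‖x_k - x_km1‖ ^ 2
        + (η ^ 2 * L / 2) * ‖f' x_k‖ ^ 2 := by
  intro z_k z_k1
  have hstep := image_sub_smul_le_of_lipschitz_gradient hgrad hLip z_k (f' x_k) η
  have hgap : ‖f' z_k - f' x_k‖ ≤ L * (|1 / c - 1| * ‖x_k - x_km1‖) := by
    simpa [z_k, norm_smul] using hLip z_k x_k
  have hgap_sq : ‖f' z_k - f' x_k‖ ^ 2 ≤ L ^ 2 * (1 / c - 1) ^ 2 * ‖x_k - x_km1‖ ^ 2 := by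
    calc ‖f' z_k - f' x_k‖ ^ 2 ≤ (L * (|1 / c - 1| * ‖x_k - x_km1‖)) ^ 2 :=
          pow_le_pow_left₀ (norm_nonneg _) hgap 2
      _ = L ^ 2 * (1 / c - 1) ^ 2 * ‖x_k - x_km1‖ ^ 2 := by rw [← sq_abs (1 / c - 1)]; ring
  linarith [mul_le_mul_of_nonneg_left hgap_sq (half_pos hη).le]

theorem spa_f_update {n : ℕ} (f : EuclideanSpace ℝ (Fin n) → ℝ)
    (f' : EuclideanSpace ℝ (Fin n) → EuclideanSpace ℝ (Fin n))
    (L : ℝ)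
    (hgrad : ∀ x, HasGradientAt f (f' x) x)
    (hLip : ∀ x y, ‖f' x - f' y‖ ≤ L * ‖x - y‖)
    (c η : ℝ) (hc0 : 0 < c) (hc1 : c ≤ 1) (hη : 0 < η)
    (x_km1 x_k : EuclideanSpace ℝ (Fin n)) :
    let z_k := x_k + (1 / c - 1) • (x_k - x_km1)
    let z_k1 := z_k - η • f' x_k
    f z_k1 + (η / 2) * ‖f' z_k‖ ^ 2
      ≤ f z_k - (η / 2) * ‖f' x_k‖ ^ 2
        + (η / 2) * L ^ 2 * (1 / c - 1) ^ 2 * ‖x_k - x_km1‖ ^ 2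
        + (η ^ 2 * L / 2) * ‖f' x_k‖ ^ 2 :=
  spa_f_update_general f f' L hgrad hLip c η hη x_km1 x_k
end
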